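/- arXiv:2308.12227 — 3 statements merged into one kernel-verified Lean document; each statement's English description precedes it below -/
import Mathlib

section
/- Let α, β ∈ ℝ^n and let Z, W ∈ ℝ^{n×k} have full column rank k with 1_nᵀ Z = 0 and 1_nᵀ W = 0. If α 1_nᵀ + 1_n αᵀ + Z Zᵀ = β 1_nᵀ + 1_n βᵀ + W Wᵀ, then α = β and there exists an orthogonal matrix Q ∈ O(k) with W = Z Q. -/
/-!
Multiplying the identity by `1ₙ` kills the centred Gram matrices and leaves
`n α + (Σ α) 1ₙ = n β + (Σ β) 1ₙ`, which determines `α`. What remains is `Z Zᵀ = W Wᵀ`. If `Z` has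
full column rank, `P = Z (Zᵀ Z)⁻¹ Zᵀ` is the projection onto its column space, which is also the
column space of `W` (a matrix annihilates `Z` iff it annihilates `Z Zᵀ`); hence `W = P W = Z Q`
with `Q = (Zᵀ Z)⁻¹ Zᵀ W`, and `Q Qᵀ = 1` follows from `Zᵀ W Wᵀ Z = (Zᵀ Z)²`.
-/

open Matrix

namespace Matrix

section Baseline

variable {n K : Type*} [Fintype n] [Field K]

theorem mul_transpose_self_mulVec_one_eq_zero {k : Type*} [Fintype k] {Z : Matrix n k K}
    (hZ : (1 : n → K) ᵥ* Z = 0) : (Z * Zᵀ) *ᵥ 1 = 0 := by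
  rw [← mulVec_mulVec, mulVec_transpose, hZ, mulVec_zero]

theorem vecMulVec_one_add_vecMulVec_one_mulVec_one (α : n → K) :
    (vecMulVec α 1 + vecMulVec 1 α) *ᵥ 1 = (Fintype.card n : K) • α + (∑ i, α i) • 1 := by
  ext i
  simp [mulVec, dotProduct, vecMulVec, Finset.sum_add_distrib]

theorem eq_of_vecMulVec_one_add_eq [CharZero K] {α β : n → K} {A B : Matrix n n K}
    (hA : A *ᵥ 1 = 0) (hB : B *ᵥ 1 = 0)
    (h : vecMulVec α 1 + vecMulVec 1 α + A = vecMulVec β 1 + vecMulVec 1 β + B) : α = β := by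
  cases isEmpty_or_nonempty n
  · exact Subsingleton.elim α β
  have hcard : (Fintype.card n : K) ≠ 0 := Nat.cast_ne_zero.mpr Fintype.card_ne_zero
  have hrow := congrArg (· *ᵥ 1) h
  simp only [add_mulVec _ A, add_mulVec _ B, hA, hB, add_zero,
    vecMulVec_one_add_vecMulVec_one_mulVec_one] at hrow
  have hsum : ∑ i, α i = ∑ i, β i := by
    have := congrArg (fun v => ∑ i, v i) hrow
    simp only [Pi.add_apply, Pi.smul_apply, Pi.one_apply, smul_eq_mul, mul_one,
      Finset.sum_add_distrib, ← Finset.mul_sum, Finset.sum_const, Finset.card_univ,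
      nsmul_eq_mul] at this
    have h2 : (2 * Fintype.card n : K) ≠ 0 := mul_ne_zero two_ne_zero hcard
    exact mul_left_cancel₀ h2 (by linear_combination this)
  rw [hsum, add_left_inj] at hrow
  exact smul_right_injective _ hcard hrow

end Baseline

section Gram

variable {m k K : Type*} [Fintype m] [Fintype k]

theorem isUnit_det_conjTranspose_mul_self_of_rank_eq [DecidableEq k] [Field K] [StarRing K]
    [PartialOrder K] [StarOrderedRing K] {Z : Matrix m k K} (hZ : Z.rank = Fintype.card k) :
    IsUnit (Zᴴ * Z).det := by
  rw [← isUnit_iff_isUnit_det, ← mulVec_surjective_iff_isUnit]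
  have hrange : LinearMap.range (Zᴴ * Z).mulVecLin = ⊤ := by
    refine Submodule.eq_top_of_finrank_eq ?_
    rw [Module.finrank_fintype_fun_eq_card, ← hZ, ← rank_conjTranspose_mul_self]
    rfl
  exact LinearMap.range_eq_top.mp hrange

variable [CommRing K] [StarRing K] [PartialOrder K] [StarOrderedRing K] [NoZeroDivisors K]

theorem mul_eq_zero_iff_of_mul_conjTranspose_eq {p : Type*} {Z W : Matrix m k K}
    (h : Z * Zᴴ = W * Wᴴ) (B : Matrix p m K) : B * Z = 0 ↔ B * W = 0 := by
  rw [← mul_self_mul_conjTranspose_eq_zero, h, mul_self_mul_conjTranspose_eq_zero]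

theorem exists_mul_conjTranspose_eq_one_of_mul_conjTranspose_eq [DecidableEq k]
    {Z W : Matrix m k K} (hZ : IsUnit (Zᴴ * Z).det) (h : Z * Zᴴ = W * Wᴴ) :
    ∃ Q : Matrix k k K, Q * Qᴴ = 1 ∧ W = Z * Q := by
  classical
  set S := Zᴴ * Z with hS
  have hSinv : (S⁻¹)ᴴ = S⁻¹ := by
    rw [conjTranspose_nonsing_inv, (isHermitian_conjTranspose_mul_self Z).eq]
  refine ⟨S⁻¹ * Zᴴ * W, ?_, ?_⟩
  · calc S⁻¹ * Zᴴ * W * (S⁻¹ * Zᴴ * W)ᴴ = S⁻¹ * (Zᴴ * (W * Wᴴ) * Z) * S⁻¹ := by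
          simp only [conjTranspose_mul, conjTranspose_conjTranspose, hSinv, Matrix.mul_assoc]
      _ = S⁻¹ * S * (S * S⁻¹) := by rw [← h]; simp only [hS, Matrix.mul_assoc]
      _ = 1 := by rw [nonsing_inv_mul _ hZ, mul_nonsing_inv _ hZ, Matrix.one_mul]
  · have hPZ : (1 - Z * S⁻¹ * Zᴴ) * Z = 0 := by
      rw [Matrix.sub_mul, Matrix.one_mul, Matrix.mul_assoc _ Zᴴ, ← hS,
        nonsing_inv_mul_cancel_right _ _ hZ, sub_self]
    have hPW := (mul_eq_zero_iff_of_mul_conjTranspose_eq h _).mp hPZ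
    rw [Matrix.sub_mul, Matrix.one_mul, sub_eq_zero] at hPW
    simpa only [Matrix.mul_assoc] using hPW

end Gram

end Matrix

theorem stmt4_general {n k : ℕ} (α β : Fin n → ℝ) (Z W : Matrix (Fin n) (Fin k) ℝ)
    (hZrank : Z.rank = k)
    (hZc : (1 : Fin n → ℝ) ᵥ* Z = 0) (hWc : (1 : Fin n → ℝ) ᵥ* W = 0)
    (heq : vecMulVec α 1 + vecMulVec 1 α + Z * Zᵀ
          = vecMulVec β 1 + vecMulVec 1 β + W * Wᵀ) :
    α = β ∧ ∃ Q : Matrix (Fin k) (Fin k) ℝ, Q * Qᵀ = 1 ∧ W = Z * Q := by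
  obtain rfl : α = β := eq_of_vecMulVec_one_add_eq
    (mul_transpose_self_mulVec_one_eq_zero hZc) (mul_transpose_self_mulVec_one_eq_zero hWc) heq
  have hgram : Z * Zᴴ = W * Wᴴ := by
    simpa only [conjTranspose_eq_transpose_of_trivial] using add_left_cancel heq
  have hS : IsUnit (Zᴴ * Z).det :=
    isUnit_det_conjTranspose_mul_self_of_rank_eq (hZrank.trans (Fintype.card_fin k).symm)
  obtain ⟨Q, hQ, hWQ⟩ := exists_mul_conjTranspose_eq_one_of_mul_conjTranspose_eq hS hgram
  exact ⟨rfl, Q, by simpa only [conjTranspose_eq_transpose_of_trivial] using hQ, hWQ⟩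

/-- Identifiability of the semiparametric latent space model: under the
centering constraint `1ₙᵀ Z = 0` (and full column rank), the decomposition
`α 1ₙᵀ + 1ₙ αᵀ + Z Zᵀ` identifies `α` and identifies `Z` up to a common
orthogonal transformation of its rows. -/
theorem stmt4 {n k : ℕ} (α β : Fin n → ℝ) (Z W : Matrix (Fin n) (Fin k) ℝ)
    (hZrank : Z.rank = k) (hWrank : W.rank = k)
    (hZc : (1 : Fin n → ℝ) ᵥ* Z = 0) (hWc : (1 : Fin n → ℝ) ᵥ* W = 0)
    (heq : vecMulVec α 1 + vecMulVec 1 α + Z * Zᵀ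
          = vecMulVec β 1 + vecMulVec 1 β + W * Wᵀ) :
    α = β ∧ ∃ Q : Matrix (Fin k) (Fin k) ℝ, Q * Qᵀ = 1 ∧ W = Z * Q :=
  stmt4_general α β Z W hZrank hZc hWc heq
end

section
/- Let Z, W ∈ ℝ^{n×k} with W of full column rank k, and let σ_min(Wᵀ W) denote the smallest eigenvalue of Wᵀ W. Then dist²(Z, W) = min_{Q ∈ O(k)} ‖Z − W Q‖_F² ≤ ‖Z Zᵀ − W Wᵀ‖_F² / (2(√2 − 1) σ_min(Wᵀ W)). -/
open Matrix

/-- The Frobenius norm of a real matrix. -/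
noncomputable def frobNorm {n k : ℕ} (X : Matrix (Fin n) (Fin k) ℝ) : ℝ :=
  Real.sqrt (∑ i, ∑ j, (X i j) ^ 2)

/-- The orthogonally-invariant distance
`dist(Z, W) = inf_{Q ∈ O(k)} ‖Z - W Q‖_F`. -/
noncomputable def distO {n k : ℕ} (Z W : Matrix (Fin n) (Fin k) ℝ) : ℝ :=
  sInf {r : ℝ | ∃ Q : Matrix (Fin k) (Fin k) ℝ, Q * Qᵀ = 1 ∧
    r = frobNorm (Z - W * Q)}

/-!
Choose `Q ∈ O(k)` maximising `tr (Qᵀ Wᵀ Z)` (orthogonal Procrustes). First-order optimality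
along Givens rotations makes `N = (W Q)ᵀ Z` symmetric, and Householder reflections make it
positive semidefinite. With `X = W Q`, `Δ = Z - X`, `A = Δᵀ X`, `S = Δᵀ Δ`, `B = Xᵀ X` we have
`X Xᵀ = W Wᵀ` and
`‖Z Zᵀ - X Xᵀ‖² = ‖√2 A + S‖² + (4 - 2√2) tr (S N) + (2√2 - 2) tr (S B)`,
where `tr (S N) ≥ 0` and `tr (S B) ≥ σ tr S = σ ‖Z - W Q‖²`.
-/

-- On the range of `F`, `G` is a square root of `-1`: this is `|(1 + α) + β i|² = 1 + 2α + α² + β²`.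
theorem one_add_smul_add_smul_mul_one_add_smul_sub_smul {R : Type*} [Ring R] [Algebra ℝ R]
    {F G : R} (hFF : F * F = F) (hGG : G * G = -F) (hFG : F * G = G) (hGF : G * F = G)
    (α β : ℝ) :
    (1 + α • F + β • G) * (1 + α • F - β • G) = 1 + (2 * α + α ^ 2 + β ^ 2) • F := by
  simp only [add_mul, mul_add, sub_eq_add_neg, mul_neg, smul_mul_smul_comm, one_mul, mul_one,
    hFF, hGG, hFG, hGF]
  module

namespace Matrix

section Orthogonal

variable {n : Type*} [DecidableEq n]

noncomputable def givensRotation (i j : n) (θ : ℝ) : Matrix n n ℝ :=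
  1 + (Real.cos θ - 1) • (single i i 1 + single j j 1) + Real.sin θ • (single i j 1 - single j i 1)

theorem transpose_givensRotation (i j : n) (θ : ℝ) :
    (givensRotation i j θ)ᵀ = 1 + (Real.cos θ - 1) • (single i i 1 + single j j 1)
      - Real.sin θ • (single i j 1 - single j i 1) := by
  simp only [givensRotation, transpose_add, transpose_smul, transpose_sub, transpose_one,
    transpose_single]
  module

variable [Fintype n]

theorem givensRotation_mem_orthogonalGroup {i j : n} (hij : i ≠ j) (θ : ℝ) :
    givensRotation i j θ ∈ orthogonalGroup n ℝ := by
  have hji := hij.symm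
  rw [mem_orthogonalGroup_iff, transpose_givensRotation, givensRotation,
    one_add_smul_add_smul_mul_one_add_smul_sub_smul]
  · rw [show 2 * (Real.cos θ - 1) + (Real.cos θ - 1) ^ 2 + Real.sin θ ^ 2 = 0 by
      linear_combination Real.sin_sq_add_cos_sq θ, zero_smul, add_zero]
  all_goals simp only [add_mul, mul_add, sub_mul, mul_sub, single_mul_single_same, mul_one,
    single_mul_single_of_ne, ne_eq, hij, hji, not_false_eq_true]
  all_goals abel

theorem trace_transpose_givensRotation_mul (i j : n) (θ : ℝ) (B : Matrix n n ℝ) :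
    trace ((givensRotation i j θ)ᵀ * B) =
      trace B + (Real.cos θ - 1) * (B i i + B j j) + Real.sin θ * (B i j - B j i) := by
  simp only [transpose_givensRotation, add_mul, sub_mul, smul_mul, one_mul, trace_add, trace_sub,
    trace_smul, trace_single_mul, smul_eq_mul, one_mul]
  ring

noncomputable def householder (x : n → ℝ) : Matrix n n ℝ :=
  1 - (2 / (x ⬝ᵥ x)) • vecMulVec x x

theorem transpose_householder (x : n → ℝ) : (householder x)ᵀ = householder x := by
  simp [householder, transpose_vecMulVec]

theorem householder_mem_orthogonalGroup (x : n → ℝ) : householder x ∈ orthogonalGroup n ℝ := by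
  rw [mem_orthogonalGroup_iff, transpose_householder, householder]
  rcases eq_or_ne x 0 with rfl | hx
  · simp
  have hxx : x ⬝ᵥ x ≠ 0 := dotProduct_self_eq_zero.not.mpr hx
  simp only [sub_mul, mul_sub, one_mul, mul_one, smul_mul_smul_comm, vecMulVec_mul_vecMulVec,
    vecMulVec_smul, smul_smul]
  rw [show 2 / (x ⬝ᵥ x) * (2 / (x ⬝ᵥ x)) * (x ⬝ᵥ x) = 2 * (2 / (x ⬝ᵥ x)) by field_simp]
  module

theorem trace_householder_mul (x : n → ℝ) (B : Matrix n n ℝ) :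
    trace (householder x * B) = trace B - 2 / (x ⬝ᵥ x) * (x ⬝ᵥ B *ᵥ x) := by
  rw [householder, sub_mul, one_mul, trace_sub, smul_mul, trace_smul, vecMulVec_mul,
    trace_vecMulVec, dotProduct_comm x (x ᵥ* B), ← dotProduct_mulVec, smul_eq_mul]

theorem transpose_eq_of_trace_transpose_mul_le {B : Matrix n n ℝ}
    (hmax : ∀ R ∈ orthogonalGroup n ℝ, trace (Rᵀ * B) ≤ trace B) : Bᵀ = B := by
  ext i j
  rcases eq_or_ne j i with rfl | hji
  · rfl
  let f θ := trace ((givensRotation j i θ)ᵀ * B)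
  have hf : f = fun θ => trace B + (Real.cos θ - 1) * (B j j + B i i)
      + Real.sin θ * (B j i - B i j) :=
    funext fun θ => trace_transpose_givensRotation_mul j i θ B
  have hmax0 : IsLocalMax f 0 := Filter.Eventually.of_forall fun θ => by
    show f θ ≤ f 0
    rw [show f 0 = trace B by simp [hf]]
    exact hmax _ (givensRotation_mem_orthogonalGroup hji θ)
  have hderiv : HasDerivAt f (B j i - B i j) 0 := by
    rw [hf]
    exact ((((Real.hasDerivAt_cos 0).sub_const 1).mul_const _).const_add _).add
      ((Real.hasDerivAt_sin 0).mul_const _) |>.congr_deriv (by simp)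
  simpa [sub_eq_zero] using hmax0.hasDerivAt_eq_zero hderiv

theorem posSemidef_of_trace_transpose_mul_le {B : Matrix n n ℝ}
    (hmax : ∀ R ∈ orthogonalGroup n ℝ, trace (Rᵀ * B) ≤ trace B) : B.PosSemidef := by
  have hB : B.IsHermitian := by
    rw [IsHermitian, conjTranspose_eq_transpose_of_trivial]
    exact transpose_eq_of_trace_transpose_mul_le hmax
  refine .of_dotProduct_mulVec_nonneg hB fun x => ?_
  rw [star_trivial]
  rcases eq_or_ne x 0 with rfl | hx
  · simp
  have hxx : 0 < x ⬝ᵥ x :=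
    (dotProduct_star_self_nonneg x).lt_of_ne' (dotProduct_self_eq_zero.not.mpr hx)
  have := hmax _ (householder_mem_orthogonalGroup x)
  rw [transpose_householder, trace_householder_mul, sub_le_self_iff] at this
  exact nonneg_of_mul_nonneg_right this (by positivity)

theorem isCompact_orthogonalGroup : IsCompact (orthogonalGroup n ℝ : Set (Matrix n n ℝ)) := by
  have hclosed : IsClosed (orthogonalGroup n ℝ : Set (Matrix n n ℝ)) := isClosed_unitary
  refine (isCompact_univ_pi fun _ => isCompact_univ_pi fun _ =>
    isCompact_Icc (a := (-1 : ℝ)) (b := 1)).of_isClosed_subset hclosed fun Q hQ i _ j _ => ?_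
  exact abs_le.mp (entry_norm_bound_of_unitary hQ i j)

theorem exists_orthogonal_posSemidef_transpose_mul (A : Matrix n n ℝ) :
    ∃ Q ∈ orthogonalGroup n ℝ, (Qᵀ * A).PosSemidef := by
  obtain ⟨Q, hQ, hmax⟩ := isCompact_orthogonalGroup.exists_isMaxOn ⟨1, one_mem _⟩
    (by fun_prop : Continuous fun Q : Matrix n n ℝ => trace (Qᵀ * A)).continuousOn
  refine ⟨Q, hQ, posSemidef_of_trace_transpose_mul_le fun R hR => ?_⟩
  simpa [transpose_mul, Matrix.mul_assoc] using hmax (mul_mem hQ hR)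

end Orthogonal

theorem mulVec_injective_of_rank_eq_card {m n : Type*} [Fintype n] {W : Matrix m n ℝ}
    (hW : W.rank = Fintype.card n) : Function.Injective W.mulVec := by
  have hker : Module.finrank ℝ (LinearMap.ker W.mulVecLin) = 0 := by
    have := LinearMap.finrank_range_add_finrank_ker W.mulVecLin
    rw [← rank, hW, Module.finrank_fintype_fun_eq_card] at this
    omega
  exact LinearMap.ker_eq_bot.mp (Submodule.finrank_eq_zero.mp hker)

section Trace

variable {m n : Type*} [Fintype m] [Fintype n]

theorem PosDef.pos_of_mulVec_eq_smul {M : Matrix n n ℝ} (hM : M.PosDef) {μ : ℝ} {v : n → ℝ}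
    (hv : v ≠ 0) (hμ : M *ᵥ v = μ • v) : 0 < μ := by
  have := hM.dotProduct_mulVec_pos hv
  rw [star_trivial, hμ, dotProduct_smul, smul_eq_mul] at this
  exact pos_of_mul_pos_left this (dotProduct_star_self_nonneg v)

theorem IsHermitian.posSemidef_sub_smul_one [DecidableEq n] {M : Matrix n n ℝ}
    (hM : M.IsHermitian) {c : ℝ} (hc : ∀ (μ : ℝ) (v : n → ℝ), v ≠ 0 → M *ᵥ v = μ • v → c ≤ μ) :
    (M - c • 1).PosSemidef := by
  have hMc : (M - c • 1).IsHermitian := hM.sub (isHermitian_one.smul (.all c))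
  refine hMc.posSemidef_iff_eigenvalues_nonneg.mpr fun i => ?_
  have hv := hMc.mulVec_eigenvectorBasis i
  rw [sub_mulVec, smul_mulVec, one_mulVec, sub_eq_iff_eq_add, ← add_smul] at hv
  simpa using hc _ _ (by simpa using hMc.eigenvectorBasis.orthonormal.ne_zero i) hv

theorem trace_mul_transpose_mul_mul_transpose (A B C D : Matrix m n ℝ) :
    trace (A * Bᵀ * (C * Dᵀ)) = trace (Dᵀ * A * (Bᵀ * C)) := by
  rw [← Matrix.mul_assoc, trace_mul_comm]
  simp only [Matrix.mul_assoc]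

theorem trace_transpose_mul_self_nonneg (M : Matrix m n ℝ) : 0 ≤ trace (Mᵀ * M) :=
  (posSemidef_conjTranspose_mul_self M).trace_nonneg

theorem trace_transpose_mul_self_mul_nonneg (Δ : Matrix m n ℝ) {P : Matrix n n ℝ}
    (hP : P.PosSemidef) : 0 ≤ trace (Δᵀ * Δ * P) := by
  rw [Matrix.mul_assoc, trace_mul_comm, Matrix.mul_assoc, ← Matrix.mul_assoc]
  exact (hP.mul_mul_conjTranspose_same Δ).trace_nonneg

theorem le_trace_gram_sub_sq [DecidableEq n] (X Z : Matrix m n ℝ) {σ : ℝ}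
    (hN : (Xᵀ * Z).PosSemidef) (hX : (Xᵀ * X - σ • 1).PosSemidef) :
    2 * (√2 - 1) * σ * trace ((Z - X)ᵀ * (Z - X)) ≤
      trace ((Z * Zᵀ - X * Xᵀ)ᵀ * (Z * Zᵀ - X * Xᵀ)) := by
  obtain ⟨Δ, rfl⟩ : ∃ Δ, Z = X + Δ := ⟨Z - X, by abel⟩
  rw [add_sub_cancel_left]
  set A := Δᵀ * X
  set S := Δᵀ * Δ
  set B := Xᵀ * X
  have hN' : Xᵀ * (X + Δ) = B + Aᵀ := by
    rw [Matrix.mul_add, transpose_mul, transpose_transpose]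
  have hA : Aᵀ = A := by
    have := hN.isHermitian.eq
    rw [conjTranspose_eq_transpose_of_trivial, hN', transpose_add, transpose_transpose,
      transpose_mul, transpose_transpose] at this
    exact (add_left_cancel this).symm
  have hXΔ : Xᵀ * Δ = A := by rw [← hA, transpose_mul, transpose_transpose]
  have hS : Sᵀ = S := by rw [transpose_mul, transpose_transpose]
  have hexpand : trace (((X + Δ) * (X + Δ)ᵀ - X * Xᵀ)ᵀ * ((X + Δ) * (X + Δ)ᵀ - X * Xᵀ)) =
      2 * trace (A * A) + 2 * trace (S * B) + 4 * trace (S * A) + trace (S * S) := by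
    simp only [Matrix.add_mul, Matrix.mul_add, Matrix.sub_mul, Matrix.mul_sub, transpose_sub,
      transpose_add, transpose_mul, transpose_transpose, trace_add, trace_sub,
      trace_mul_transpose_mul_mul_transpose]
    rw [hXΔ, show Δᵀ * X = A from rfl, show Δᵀ * Δ = S from rfl, show Xᵀ * X = B from rfl,
      trace_mul_comm B A, trace_mul_comm B S, trace_mul_comm A S]
    ring
  have hsq : 0 ≤ 2 * trace (A * A) + 2 * √2 * trace (S * A) + trace (S * S) := by
    have := trace_transpose_mul_self_nonneg (√2 • A + S)
    rw [transpose_add, transpose_smul, hA, hS] at this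
    simp only [add_mul, mul_add, Matrix.smul_mul, Matrix.mul_smul, smul_smul, trace_add,
      trace_smul, trace_mul_comm A S, smul_eq_mul, Real.mul_self_sqrt zero_le_two] at this
    linarith
  have hSN : 0 ≤ trace (S * A) + trace (S * B) := by
    have := trace_transpose_mul_self_mul_nonneg Δ hN
    rwa [hN', hA, Matrix.mul_add, trace_add, add_comm] at this
  have hSB : σ * trace S ≤ trace (S * B) := by
    have := trace_transpose_mul_self_mul_nonneg Δ hX
    rw [Matrix.mul_sub, trace_sub, Matrix.mul_smul, Matrix.mul_one, trace_smul,
      smul_eq_mul] at this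
    linarith
  have h1 : 1 ≤ √2 := Real.one_lt_sqrt_two.le
  have h2 : √2 ≤ 2 := by nlinarith [Real.sq_sqrt zero_le_two, Real.sqrt_nonneg 2]
  rw [hexpand]
  linarith [mul_nonneg (by linarith : 0 ≤ 4 - 2 * √2) hSN,
    mul_nonneg (by linarith : 0 ≤ 2 * √2 - 2) (sub_nonneg.mpr hSB)]

end Trace

end Matrix

theorem frobNorm_sq {n k : ℕ} (X : Matrix (Fin n) (Fin k) ℝ) :
    frobNorm X ^ 2 = trace (Xᵀ * X) := by
  rw [frobNorm, Real.sq_sqrt (by positivity), Finset.sum_comm]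
  simp [trace, mul_apply, sq]

theorem distO_nonneg {n k : ℕ} (Z W : Matrix (Fin n) (Fin k) ℝ) : 0 ≤ distO Z W :=
  Real.sInf_nonneg fun _ ⟨_, _, hr⟩ => hr ▸ Real.sqrt_nonneg _

theorem distO_le_frobNorm {n k : ℕ} (Z W : Matrix (Fin n) (Fin k) ℝ)
    {Q : Matrix (Fin k) (Fin k) ℝ} (hQ : Q ∈ orthogonalGroup (Fin k) ℝ) :
    distO Z W ≤ frobNorm (Z - W * Q) :=
  csInf_le ⟨0, fun _ ⟨_, _, hr⟩ => hr ▸ Real.sqrt_nonneg _⟩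
    ⟨Q, (mem_orthogonalGroup_iff _ _).mp hQ, rfl⟩

/-- If `W` has full column rank and `σ` is the smallest eigenvalue of `Wᵀ W`,
then `dist²(Z, W) ≤ ‖Z Zᵀ - W Wᵀ‖_F² / (2(√2 - 1) σ)`. -/
theorem stmt10 {n k : ℕ} (Z W : Matrix (Fin n) (Fin k) ℝ) (hW : W.rank = k)
    (σ : ℝ)
    (hσeig : ∃ v : Fin k → ℝ, v ≠ 0 ∧ (Wᵀ * W) *ᵥ v = σ • v)
    (hσmin : ∀ (μ : ℝ) (v : Fin k → ℝ), v ≠ 0 → (Wᵀ * W) *ᵥ v = μ • v → σ ≤ μ) :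
    distO Z W ^ 2 ≤ frobNorm (Z * Zᵀ - W * Wᵀ) ^ 2 / (2 * (Real.sqrt 2 - 1) * σ) := by
  obtain ⟨v, hv, hσv⟩ := hσeig
  have hWW : (Wᵀ * W).PosDef :=
    .conjTranspose_mul_self W (mulVec_injective_of_rank_eq_card (by rw [hW, Fintype.card_fin]))
  have hσ : 0 < σ := hWW.pos_of_mulVec_eq_smul hv hσv
  obtain ⟨Q, hQ, hN⟩ := exists_orthogonal_posSemidef_transpose_mul (Wᵀ * Z)
  have hX : ((W * Q)ᵀ * (W * Q) - σ • 1).PosSemidef := by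
    have := (hWW.isHermitian.posSemidef_sub_smul_one hσmin).conjTranspose_mul_mul_same Q
    rw [conjTranspose_eq_transpose_of_trivial, Matrix.mul_sub, Matrix.sub_mul, Matrix.mul_smul,
      Matrix.mul_one, Matrix.smul_mul, (mem_orthogonalGroup_iff' _ _).mp hQ] at this
    convert this using 2
    rw [transpose_mul]
    simp only [Matrix.mul_assoc]
  have hXX : W * Q * (W * Q)ᵀ = W * Wᵀ := by
    rw [transpose_mul, Matrix.mul_assoc, ← Matrix.mul_assoc Q, (mem_orthogonalGroup_iff _ _).mp hQ,
      Matrix.one_mul]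
  have key := le_trace_gram_sub_sq (W * Q) Z (by rwa [transpose_mul, Matrix.mul_assoc]) hX
  rw [hXX, ← frobNorm_sq, ← frobNorm_sq] at key
  have hD : 0 < 2 * (√2 - 1) * σ :=
    mul_pos (mul_pos two_pos (sub_pos.mpr Real.one_lt_sqrt_two)) hσ
  rw [le_div_iff₀ hD]
  calc distO Z W ^ 2 * (2 * (√2 - 1) * σ)
      ≤ frobNorm (Z - W * Q) ^ 2 * (2 * (√2 - 1) * σ) := by
        gcongr
        · exact distO_nonneg Z W
        · exact distO_le_frobNorm Z W hQ
    _ ≤ frobNorm (Z * Zᵀ - W * Wᵀ) ^ 2 := by linarith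
end

section
/- Let B ∈ ℝ^{m×m} be symmetric and let U ∈ ℝ^{m×r} have linearly independent columns whose span equals the column space of B. Then Uᵀ B U ∈ ℝ^{r×r} is invertible, and the matrix M = U (Uᵀ B U)^{-1} Uᵀ satisfies the four Penrose equations: B M B = B, M B M = M, (B M)ᵀ = B M, and (M B)ᵀ = M B; that is, M is the Moore–Penrose pseudoinverse B⁺ of B. In particular, M does not depend on the choice of basis U of the column space of B. -/
/-!
Write `M = U (Uᵀ B U)⁻¹ Uᵀ`. If `Uᵀ B U x = 0`, then `B U x` lies in `range U = range B`
and is orthogonal to `range U`, so `B U x = 0`; then `U x` lies in `range B ∩ ker B = 0`,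
so `x = 0`. Since `M B U = U` and every column of `B` lies in `range U`, `M B B = B` and
`M B M = M`; with `B` and `M` symmetric this gives `B M = (B M)ᵀ (B M)`, hence all four
Penrose equations. Matrices satisfying the Penrose equations for `B` are unique, so `M` does
not depend on `U`.
-/

open Matrix

namespace Matrix

variable {m n p R : Type*}

structure IsPenroseInverse [Fintype m] [Fintype n] [Semiring R]
    (B : Matrix m n R) (M : Matrix n m R) : Prop where
  mul_mul_self_left : B * M * B = B
  mul_mul_self_right : M * B * M = M
  transpose_mul_left : (B * M)ᵀ = B * M
  transpose_mul_right : (M * B)ᵀ = M * B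

namespace IsPenroseInverse

variable [Fintype m] [Fintype n] [CommSemiring R] {B : Matrix m n R} {M N : Matrix n m R}

theorem mul_left_eq (hM : IsPenroseInverse B M) (hN : IsPenroseInverse B N) : B * M = B * N :=
  calc B * M = (B * N * B * M)ᵀ := by rw [hN.mul_mul_self_left, hM.transpose_mul_left]
    _ = (B * M)ᵀ * (B * N)ᵀ := by rw [Matrix.mul_assoc _ B M, transpose_mul]
    _ = B * M * B * N := by
      rw [hM.transpose_mul_left, hN.transpose_mul_left, ← Matrix.mul_assoc]
    _ = B * N := by rw [hM.mul_mul_self_left]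

theorem mul_right_eq (hM : IsPenroseInverse B M) (hN : IsPenroseInverse B N) : M * B = N * B :=
  calc M * B = (M * (B * N * B))ᵀ := by rw [hN.mul_mul_self_left, hM.transpose_mul_right]
    _ = (N * B)ᵀ * (M * B)ᵀ := by rw [Matrix.mul_assoc B, ← Matrix.mul_assoc M, transpose_mul]
    _ = N * (B * M * B) := by
      rw [hN.transpose_mul_right, hM.transpose_mul_right]; simp only [Matrix.mul_assoc]
    _ = N * B := by rw [hM.mul_mul_self_left]

theorem eq (hM : IsPenroseInverse B M) (hN : IsPenroseInverse B N) : M = N :=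
  calc M = M * B * M := hM.mul_mul_self_right.symm
    _ = N * B * N := by
      rw [hM.mul_right_eq hN, Matrix.mul_assoc, hM.mul_left_eq hN, ← Matrix.mul_assoc]
    _ = N := hN.mul_mul_self_right

end IsPenroseInverse

theorem isPenroseInverse_of_isSymm [Fintype n] [CommSemiring R] {B M : Matrix n n R}
    (hB : B.IsSymm) (hM : M.IsSymm) (hMBB : M * B * B = B) (hMBM : M * B * M = M) :
    IsPenroseInverse B M := by
  have hBM : (B * M)ᵀ = B * M := by
    have h : (B * M)ᵀ * (B * M) = B * M := by
      rw [transpose_mul, hM.eq, hB.eq, ← Matrix.mul_assoc, hMBB]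
    rw [← h, transpose_mul, transpose_transpose]
  have hMB : M * B = B * M := by rw [← hBM, transpose_mul, hM.eq, hB.eq]
  exact ⟨by rw [← hMB, hMBB], hMBM, hBM, by rw [hMB, hBM]⟩

theorem isPenroseInverse_mul_inv_mul_transpose [Fintype m] [Fintype n] [DecidableEq n]
    [CommRing R] {B : Matrix m m R} {U : Matrix m n R} {C : Matrix n m R} (hB : B.IsSymm)
    (hU : IsUnit (Uᵀ * B * U)) (hC : U * C = B) :
    IsPenroseInverse B (U * (Uᵀ * B * U)⁻¹ * Uᵀ) := by
  set G := (Uᵀ * B * U)⁻¹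
  have hG : G.IsSymm :=
    IsSymm.inv (by simp only [IsSymm, transpose_mul, transpose_transpose, hB.eq, Matrix.mul_assoc])
  have hGU : G * (Uᵀ * B * U) = 1 := nonsing_inv_mul _ ((isUnit_iff_isUnit_det _).mp hU)
  have hMBU : U * G * Uᵀ * B * U = U := by
    simp only [Matrix.mul_assoc] at hGU ⊢
    rw [hGU, Matrix.mul_one]
  refine isPenroseInverse_of_isSymm hB ?_ ?_ ?_
  · simp only [IsSymm, transpose_mul, transpose_transpose, hG.eq, Matrix.mul_assoc]
  · calc U * G * Uᵀ * B * B = U * G * Uᵀ * B * U * C := by rw [Matrix.mul_assoc _ U C, hC]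
      _ = B := by rw [hMBU, hC]
  · simp only [← Matrix.mul_assoc]
    rw [hMBU]

theorem exists_mul_eq_of_range_mulVecLin_le [Fintype n] [Fintype p]
    [CommSemiring R] {A : Matrix m n R} {B : Matrix m p R}
    (h : LinearMap.range B.mulVecLin ≤ LinearMap.range A.mulVecLin) :
    ∃ C : Matrix n p R, A * C = B := by
  classical
  choose c hc using fun k => h ⟨Pi.single k 1, mulVec_single_one B k⟩
  refine ⟨(of c)ᵀ, ext fun i k => ?_⟩
  simpa [mul_apply, mulVec, dotProduct] using congrFun (hc k) i

section LinearOrderedField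

variable [Fintype m] [Fintype n] [Field R] [LinearOrder R] [IsStrictOrderedRing R]

theorem transpose_mul_self_mulVec_eq_zero (A : Matrix m n R) (v : n → R) :
    (Aᵀ * A) *ᵥ v = 0 ↔ A *ᵥ v = 0 := by
  simpa only [LinearMap.mem_ker, mulVecLin_apply] using
    SetLike.ext_iff.mp (ker_mulVecLin_transpose_mul_self A) v

theorem isUnit_transpose_mul_mul_of_range_eq [DecidableEq n] {B : Matrix m m R}
    {U : Matrix m n R} (hB : B.IsSymm) (hU : Function.Injective U.mulVec)
    (hUB : LinearMap.range U.mulVecLin = LinearMap.range B.mulVecLin) :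
    IsUnit (Uᵀ * B * U) := by
  refine mulVec_injective_iff_isUnit.mp <|
    (injective_iff_map_eq_zero (Uᵀ * B * U).mulVecLin).mpr fun x hx => ?_
  obtain ⟨y, hy⟩ : U *ᵥ x ∈ LinearMap.range B.mulVecLin := hUB ▸ ⟨x, rfl⟩
  obtain ⟨c, hc⟩ : B *ᵥ (U *ᵥ x) ∈ LinearMap.range U.mulVecLin :=
    hUB ▸ ⟨U *ᵥ x, rfl⟩
  rw [mulVecLin_apply] at hx hy hc
  have hUc : U *ᵥ c = 0 := (transpose_mul_self_mulVec_eq_zero U c).mp <| by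
    rw [← mulVec_mulVec, hc, mulVec_mulVec, mulVec_mulVec, hx]
  have hBy : B *ᵥ y = 0 := (transpose_mul_self_mulVec_eq_zero B y).mp <| by
    rw [hB.eq, ← mulVec_mulVec, hy, ← hc, hUc]
  exact hU (by rw [← hy, hBy, mulVec_zero])

theorem isPenroseInverse_mul_inv_mul_transpose_of_range_eq [DecidableEq n]
    {B : Matrix m m R} {U : Matrix m n R} (hB : B.IsSymm) (hU : Function.Injective U.mulVec)
    (hUB : LinearMap.range U.mulVecLin = LinearMap.range B.mulVecLin) :
    IsPenroseInverse B (U * (Uᵀ * B * U)⁻¹ * Uᵀ) :=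
  have ⟨_, hC⟩ := exists_mul_eq_of_range_mulVecLin_le hUB.ge
  isPenroseInverse_mul_inv_mul_transpose hB (isUnit_transpose_mul_mul_of_range_eq hB hU hUB) hC

end LinearOrderedField

end Matrix

/-- If `B` is symmetric and the columns of `U` form a basis of the column
space of `B`, then `Uᵀ B U` is invertible and `M = U (Uᵀ B U)⁻¹ Uᵀ` satisfies
the four Penrose equations, i.e. `M = B⁺`; in particular `M` does not depend
on the choice of basis `U`. -/
theorem stmt17 {m r : ℕ} (B : Matrix (Fin m) (Fin m) ℝ) (hB : Bᵀ = B)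
    (U : Matrix (Fin m) (Fin r) ℝ)
    (hUind : LinearIndependent ℝ (fun j : Fin r => Uᵀ j))
    (hUspan : Submodule.span ℝ (Set.range fun j : Fin r => Uᵀ j)
        = LinearMap.range B.mulVecLin) :
    IsUnit (Uᵀ * B * U) ∧
    (B * (U * (Uᵀ * B * U)⁻¹ * Uᵀ) * B = B ∧
      (U * (Uᵀ * B * U)⁻¹ * Uᵀ) * B * (U * (Uᵀ * B * U)⁻¹ * Uᵀ)
        = U * (Uᵀ * B * U)⁻¹ * Uᵀ ∧
      (B * (U * (Uᵀ * B * U)⁻¹ * Uᵀ))ᵀ = B * (U * (Uᵀ * B * U)⁻¹ * Uᵀ) ∧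
      ((U * (Uᵀ * B * U)⁻¹ * Uᵀ) * B)ᵀ = (U * (Uᵀ * B * U)⁻¹ * Uᵀ) * B) ∧
    (∀ U' : Matrix (Fin m) (Fin r) ℝ,
      LinearIndependent ℝ (fun j : Fin r => U'ᵀ j) →
      Submodule.span ℝ (Set.range fun j : Fin r => U'ᵀ j)
          = LinearMap.range B.mulVecLin →
      U * (Uᵀ * B * U)⁻¹ * Uᵀ = U' * (U'ᵀ * B * U')⁻¹ * U'ᵀ) := by
  have hU := mulVec_injective_iff.mpr hUind
  have hUB := (range_mulVecLin U).trans hUspan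
  have hM := isPenroseInverse_mul_inv_mul_transpose_of_range_eq hB hU hUB
  refine ⟨isUnit_transpose_mul_mul_of_range_eq hB hU hUB,
    ⟨hM.mul_mul_self_left, hM.mul_mul_self_right,
      hM.transpose_mul_left, hM.transpose_mul_right⟩,
    fun U' hU'ind hU'span => hM.eq ?_⟩
  exact isPenroseInverse_mul_inv_mul_transpose_of_range_eq hB
    (mulVec_injective_iff.mpr hU'ind) ((range_mulVecLin U').trans hU'span)
end
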